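/- arXiv:1607.02413 — 3 statements merged into one kernel-verified Lean document; each statement's English description precedes it below -/
import Mathlib

section
/- For all real β with 0 < β, we have -log(1 - β/(1+β)) - β/(1+β) ≤ (1/2) · log(1 + β²). -/
/-!
Since `1 - β/(1+β) = (1+β)⁻¹`, the claim reads `2 log(1+β) - x ≤ log(1+β²)` with `x = 2β/(1+β)`.
This follows from the identity `1 + β² = (1+β)² (1 - x + x²/2)` and the bound
`exp(-x) ≤ 1 - x + x²/2` for `x ≥ 0`, which in turn comes from
`exp x ≥ 1 + x + x²/2` and `(1 + x + x²/2)(1 - x + x²/2) = 1 + x⁴/4 ≥ 1`.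
-/

open Real

lemma Real.exp_neg_le_one_sub_add_sq_div_two {x : ℝ} (hx : 0 ≤ x) :
    exp (-x) ≤ 1 - x + x ^ 2 / 2 := by
  have hexp : 1 + x + x ^ 2 / 2 ≤ exp x := quadratic_le_exp_of_nonneg hx
  rw [exp_neg, inv_le_iff_one_le_mul₀ (exp_pos x)]
  nlinarith [sq_nonneg (x ^ 2)]

lemma Real.one_sub_add_sq_div_two_pos (x : ℝ) : 0 < 1 - x + x ^ 2 / 2 := by
  nlinarith [sq_nonneg (x - 1)]

lemma Real.neg_le_log_one_sub_add_sq_div_two {x : ℝ} (hx : 0 ≤ x) :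
    -x ≤ log (1 - x + x ^ 2 / 2) :=
  (le_log_iff_exp_le (one_sub_add_sq_div_two_pos x)).2
    (exp_neg_le_one_sub_add_sq_div_two hx)

theorem stmt_0 (β : ℝ) (hβ : 0 < β) :
    -Real.log (1 - β / (1 + β)) - β / (1 + β) ≤ (1 / 2) * Real.log (1 + β ^ 2) := by
  have hβ₁ : 0 < 1 + β := by linarith
  set x := 2 * β / (1 + β) with hx
  have hsub : 1 - β / (1 + β) = (1 + β)⁻¹ := by field_simp; ring
  have hfactor : 1 + β ^ 2 = (1 + β) ^ 2 * (1 - x + x ^ 2 / 2) := by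
    rw [hx]; field_simp; ring
  have hlog : log (1 + β ^ 2) = 2 * log (1 + β) + log (1 - x + x ^ 2 / 2) := by
    rw [hfactor, log_mul (by positivity) (one_sub_add_sq_div_two_pos x).ne', log_pow, Nat.cast_ofNat]
  have hbound := neg_le_log_one_sub_add_sq_div_two (x := x) (by positivity)
  rw [hsub, log_inv, neg_neg, hlog]
  have hx_double : x = 2 * (β / (1 + β)) := by rw [hx]; ring
  linarith
end

section
/- For integers m̃₁,…,m̃_L and n with 0 ≤ m̃_j ≤ m for all j and ∑_j m̃_j = n, and for a > 0, we have ∑_{j=1}^L [ -log(1 - m̃_j·a/(1+ma)) - m̃_j·a/(1+ma) ] ≤ (n/m)·[ -log(1 - ma/(1+ma)) - ma/(1+ma) ]. -/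
open Real Finset

/- The map `x ↦ -log (1 - x) - x` is convex and vanishes at `0`, so scaling the argument by
`t ∈ [0, 1]` scales the value by at most `t`. Writing each term as `t_j · x` with
`x = m a / (1 + m a)` and `t_j = m̃_j / m`, summing over `j` gives the claim since
`∑ t_j = n / m`. -/

lemma neg_log_one_sub_mul_sub_mul_le {t x : ℝ} (ht₀ : 0 ≤ t) (ht₁ : t ≤ 1) (hx : x < 1) :
    -log (1 - t * x) - t * x ≤ t * (-log (1 - x) - x) := by
  -- concavity of `log` between `1 - x` and `1`, with weights `t` and `1 - t`
  have hconc := strictConcaveOn_log_Ioi.concaveOn.2 (Set.mem_Ioi.2 (sub_pos.2 hx))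
    (Set.mem_Ioi.2 one_pos) ht₀ (sub_nonneg.2 ht₁) (add_sub_cancel t 1)
  have hcomb : t • (1 - x) + (1 - t) • (1 : ℝ) = 1 - t * x := by simp only [smul_eq_mul]; ring
  rw [hcomb, smul_eq_mul, smul_eq_mul, log_one, mul_zero, add_zero] at hconc
  linarith

theorem stmt_10 (L m n : ℕ) (hm : 1 ≤ m) (mt : Fin L → ℕ)
    (hmt : ∀ j, mt j ≤ m) (hsum : ∑ j, mt j = n) (a : ℝ) (ha : 0 < a) :
    ∑ j, (-Real.log (1 - (mt j : ℝ) * a / (1 + m * a)) - (mt j : ℝ) * a / (1 + m * a))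
      ≤ ((n : ℝ) / m) *
        (-Real.log (1 - (m : ℝ) * a / (1 + m * a)) - (m : ℝ) * a / (1 + m * a)) := by
  have hm_pos : (0 : ℝ) < m := by exact_mod_cast hm
  have hden : (0 : ℝ) < 1 + m * a := by positivity
  set x : ℝ := m * a / (1 + m * a)
  have hx : x < 1 := (div_lt_one hden).2 (lt_one_add _)
  have hterm (j : Fin L) : (mt j : ℝ) * a / (1 + m * a) = (mt j / m) * x := by
    simp only [x]
    field_simp
  calc ∑ j, (-log (1 - (mt j : ℝ) * a / (1 + m * a)) - (mt j : ℝ) * a / (1 + m * a))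
      ≤ ∑ j, ((mt j : ℝ) / m) * (-log (1 - x) - x) := by
        refine sum_le_sum fun j _ => ?_
        rw [hterm]
        exact neg_log_one_sub_mul_sub_mul_le (by positivity)
          ((div_le_one hm_pos).2 (by exact_mod_cast hmt j)) hx
    _ = ((n : ℝ) / m) * (-log (1 - x) - x) := by
        rw [← sum_mul, ← sum_div, ← hsum, Nat.cast_sum]
end

section
/- For integers p and m with 2 ≤ m and m dividing p, the number of partitions of {1,…,p} into p/m unordered blocks of size m equals p!/((m!)^{p/m}·(p/m)!), and this is lower bounded by C(⌊p/2⌋, m)^{(1/2)·⌊p/m⌋}. -/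
/-!
Write `k = p / m` and `N` for the number of partitions. A partition into blocks of size `m`
together with a bijection from its blocks to `Fin k` is the same thing as a map `Fin p → Fin k`
all of whose fibres have `m` elements. The permutations of `Fin p` act transitively on these
maps, with stabilisers `∏ Perm (fibre)`; counting permutations, then maps, gives
`p! = N · (m!)^k · k!`.

For the bound, `C(⌊p/2⌋, m) · m! ≤ (p/2)^m`, so for `k ≥ 2` (smaller `k` are trivial) it
suffices that `(p/2)^p (m!)^k (k!)^2 ≤ (p!)^2`. Stirling's bounds
`√(2πn) (n/e)^n ≤ n! ≤ e √n (n/e)^n` and `(p/e)^2 = (p/2)(m/e)(2k/e)` reduce this to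
`e √m (k/e)^2 ≤ (2k/e)^m` and `e^2 k ≤ 2πp`.
-/

/-- The number of partitions of `{1,…,p}` into blocks of size `m`. -/
noncomputable def numBlockPartitions (p m : ℕ) : ℕ :=
  Nat.card {P : Finpartition (Finset.univ : Finset (Fin p)) // ∀ s ∈ P.parts, s.card = m}

open Finset
open scoped Nat

theorem Nat.card_eq_mul_of_card_fiber {X Y : Type*} [Finite X] [Fintype Y] (f : X → Y) {n : ℕ}
    (h : ∀ y, Nat.card {x // f x = y} = n) : Nat.card X = Nat.card Y * n := by
  rw [← Nat.card_congr (Equiv.sigmaFiberEquiv f), Nat.card_sigma,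
    Finset.sum_congr rfl fun y _ ↦ h y, sum_const, Finset.card_univ, Nat.card_eq_fintype_card,
    smul_eq_mul]

namespace Finpartition

variable {α : Type*} [DecidableEq α]

theorem ext_of_part {s : Finset α} {P Q : Finpartition s}
    (h : ∀ a ∈ s, P.part a = Q.part a) : P = Q := by
  suffices ∀ {P Q : Finpartition s}, (∀ a ∈ s, P.part a = Q.part a) → P.parts ⊆ Q.parts from
    Finpartition.ext (this h |>.antisymm (this fun a ha ↦ (h a ha).symm))
  intro P Q h t ht
  obtain ⟨a, hat⟩ := P.nonempty_of_mem_parts ht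
  have has : a ∈ s := P.le ht hat
  rw [← P.part_eq_of_mem ht hat, h a has]
  exact Q.part_mem.2 has

theorem card_parts_eq_of_forall_card_eq {s : Finset α} {P : Finpartition s} {m n : ℕ}
    (hm : 0 < m) (hP : ∀ t ∈ P.parts, #t = m) (hs : #s = n * m) : #P.parts = n := by
  have := P.sum_card_parts
  rw [sum_const_nat hP, hs] at this
  exact Nat.eq_of_mul_eq_mul_right hm this

variable [Fintype α]

def partMap (P : Finpartition (univ : Finset α)) (a : α) : P.parts :=
  ⟨P.part a, P.part_mem.2 (mem_univ a)⟩

theorem partMap_surjective (P : Finpartition (univ : Finset α)) :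
    Function.Surjective P.partMap := fun ⟨t, ht⟩ ↦ by
  obtain ⟨a, hat⟩ := P.nonempty_of_mem_parts ht
  exact ⟨a, Subtype.ext (P.part_eq_of_mem ht hat)⟩

theorem partMap_eq_iff_mem {P : Finpartition (univ : Finset α)} {a : α} {t : P.parts} :
    P.partMap a = t ↔ a ∈ t.1 := by
  rw [Subtype.ext_iff]
  exact P.part_eq_iff_mem t.2

variable {κ : Type*} [DecidableEq κ]

def ofKer (f : α → κ) : Finpartition (univ : Finset α) :=
  ofSetoid (Setoid.ker f)

theorem part_ofKer (f : α → κ) (a : α) : (ofKer f).part a = ({b | f b = f a} : Finset α) := by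
  ext b
  simp [ofKer, mem_part_ofSetoid_iff_rel, Setoid.ker, eq_comm]

theorem ofKer_eq_iff {f : α → κ} {P : Finpartition (univ : Finset α)} :
    ofKer f = P ↔ ∀ a b, f a = f b ↔ P.partMap a = P.partMap b := by
  have part_eq (a : α) : P.part a = ({b | P.partMap b = P.partMap a} : Finset α) := by
    ext b
    simp [partMap, eq_comm, P.mem_part_iff_part_eq_part]
  constructor
  · rintro rfl a b
    rw [partMap, partMap, Subtype.mk.injEq, part_ofKer, part_ofKer, Finset.ext_iff]
    simp only [mem_filter, mem_univ, true_and]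
    exact ⟨fun h c ↦ by rw [h], fun h ↦ (h a).1 rfl⟩
  · intro h
    refine ext_of_part fun a _ ↦ ?_
    rw [part_ofKer, part_eq]
    simp only [h]

end Finpartition

open Finpartition

section Counting

variable {α κ : Type*} [Fintype α] [Fintype κ] [DecidableEq κ]

variable (α κ) in
abbrev UniformMaps (m : ℕ) : Type _ := {f : α → κ // ∀ j, Fintype.card {a // f a = j} = m}

theorem UniformMaps.nonempty {m : ℕ} (h : Fintype.card α = Fintype.card κ * m) :
    Nonempty (UniformMaps α κ m) := by
  obtain ⟨e⟩ : Nonempty (α ≃ κ × Fin m) := Fintype.card_eq.1 (by simpa using h)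
  refine ⟨fun a ↦ (e a).1, fun j ↦ ?_⟩
  rw [Fintype.card_congr ((e.subtypeEquiv (q := fun x ↦ x.1 = j) fun _ ↦ Iff.rfl).trans
    (Equiv.prodSubtypeFstEquivSubtypeProd (p := (· = j))))]
  simp

variable [DecidableEq α]

variable (α) in
abbrev BlockPartitions (m : ℕ) : Type _ :=
  {P : Finpartition (univ : Finset α) // ∀ s ∈ P.parts, #s = m}

theorem factorial_card_eq_card_uniformMaps_mul {m : ℕ} (f₀ : UniformMaps α κ m) :
    (Fintype.card α)! = Nat.card (UniformMaps α κ m) * (m !) ^ Fintype.card κ := by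
  have stabilizer_card :
      Nat.card {τ : Equiv.Perm α // f₀.1 ∘ τ = f₀.1} = (m !) ^ Fintype.card κ := by
    simp [Nat.card_eq_fintype_card, DomMulAct.stabilizer_card, f₀.2]
  rw [← Fintype.card_perm, ← Nat.card_eq_fintype_card, ← stabilizer_card]
  refine Nat.card_eq_mul_of_card_fiber
    (fun σ ↦ ⟨f₀.1 ∘ σ, fun j ↦
      (Fintype.card_congr (σ.subtypeEquiv fun _ ↦ Iff.rfl)).trans (f₀.2 j)⟩)
    fun f ↦ Nat.card_congr ?_
  let σf : Equiv.Perm α :=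
    Equiv.ofFiberEquiv fun j ↦ Fintype.equivOfCardEq ((f.2 j).trans (f₀.2 j).symm)
  have hσf : f₀.1 ∘ σf = f.1 := funext (Equiv.ofFiberEquiv_map _)
  refine (Equiv.mulRight σf⁻¹).subtypeEquiv fun σ ↦ ?_
  rw [Subtype.ext_iff, ← hσf]
  simp [Equiv.Perm.coe_mul, ← Function.comp_assoc, Equiv.comp_symm_eq]

def UniformMaps.toBlockPartition {m : ℕ} (f : UniformMaps α κ m) : BlockPartitions α m :=
  ⟨ofKer f.1, fun s hs ↦ by
    obtain ⟨a, has⟩ := (ofKer f.1).nonempty_of_mem_parts hs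
    rw [← (ofKer f.1).part_eq_of_mem hs has, part_ofKer]
    exact (Fintype.card_subtype _).symm.trans (f.2 (f.1 a))⟩

theorem card_fiber_toBlockPartition {m : ℕ} (P : BlockPartitions α m)
    (hP : #P.1.parts = Fintype.card κ) :
    Nat.card {f : UniformMaps α κ m // f.toBlockPartition = P} = (Fintype.card κ)! := by
  let g (e : P.1.parts ≃ κ) : {f : UniformMaps α κ m // f.toBlockPartition = P} :=
    ⟨⟨e ∘ P.1.partMap, fun j ↦ by
      refine (Fintype.card_congr (Equiv.subtypeEquivRight fun a ↦ ?_)).trans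
        ((Fintype.card_coe _).trans (P.2 _ (e.symm j).2))
      simp [← e.eq_symm_apply, partMap_eq_iff_mem]⟩,
      Subtype.ext (ofKer_eq_iff.2 fun a b ↦ e.apply_eq_iff_eq)⟩
  have g_bijective : Function.Bijective g := by
    refine ⟨fun e e' h ↦ Equiv.coe_fn_injective <|
      P.1.partMap_surjective.injective_comp_right (congrArg (fun f ↦ f.1.1) h), ?_⟩
    rintro ⟨⟨f, _⟩, hfP⟩
    have hker : ∀ a b, f a = f b ↔ P.1.partMap a = P.1.partMap b :=
      ofKer_eq_iff.1 (congrArg Subtype.val hfP)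
    have hs := P.1.partMap_surjective
    obtain ⟨d, hd⟩ : ∃ d : P.1.parts → κ, d ∘ P.1.partMap = f :=
      ⟨f ∘ Function.surjInv hs, funext fun a ↦ (hker _ _).2 (Function.surjInv_eq hs _)⟩
    have d_injective : Function.Injective d := hs.forall₂.2 fun a b hab ↦ by
      rw [← hker, ← hd]
      exact hab
    refine ⟨Equiv.ofBijective d ((Fintype.bijective_iff_injective_and_card d).2
      ⟨d_injective, by simpa using hP⟩), Subtype.ext (Subtype.ext hd)⟩
  rw [← Nat.card_congr (Equiv.ofBijective g g_bijective), Nat.card_eq_fintype_card,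
    Fintype.card_equiv (Fintype.equivOfCardEq (by simpa using hP)), Fintype.card_coe, hP]

theorem factorial_card_eq_card_blockPartitions_mul {m : ℕ} (hm : 0 < m)
    (h : Fintype.card α = Fintype.card κ * m) :
    (Fintype.card α)! =
      Nat.card (BlockPartitions α m) * ((m !) ^ Fintype.card κ * (Fintype.card κ)!) := by
  obtain ⟨f₀⟩ := UniformMaps.nonempty h
  rw [factorial_card_eq_card_uniformMaps_mul f₀, Nat.card_eq_mul_of_card_fiber
    UniformMaps.toBlockPartition fun P ↦ card_fiber_toBlockPartition P
      (card_parts_eq_of_forall_card_eq hm P.2 (by simpa using h))]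
  ring

end Counting

theorem factorial_eq_numBlockPartitions_mul {p m : ℕ} (hm : 0 < m) (hdvd : m ∣ p) :
    p ! = numBlockPartitions p m * ((m !) ^ (p / m) * (p / m)!) := by
  simpa only [numBlockPartitions, Fintype.card_fin] using
    factorial_card_eq_card_blockPartitions_mul (α := Fin p) (κ := Fin (p / m)) hm
      (by simp [Nat.div_mul_cancel hdvd])

open Real

theorem exp_one_sq_lt_eight : exp 1 ^ 2 < 8 := by
  nlinarith [exp_one_lt_d9, exp_pos 1]

theorem factorial_le_stirling {n : ℕ} (hn : n ≠ 0) :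
    (n ! : ℝ) ≤ exp 1 * √n * (n / exp 1) ^ n := by
  have hseq : Stirling.stirlingSeq n ≤ exp 1 / √2 := by
    obtain ⟨l, rfl⟩ := Nat.exists_eq_succ_of_ne_zero hn
    simpa [Stirling.stirlingSeq_one] using Stirling.stirlingSeq'_antitone (Nat.zero_le l)
  calc (n ! : ℝ) = Stirling.stirlingSeq n * (√(2 * n) * (n / exp 1) ^ n) := by
        rw [Stirling.stirlingSeq]
        field_simp
    _ ≤ exp 1 / √2 * (√(2 * n) * (n / exp 1) ^ n) := by gcongr
    _ = exp 1 * √n * (n / exp 1) ^ n := by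
        rw [sqrt_mul zero_le_two]
        field_simp

theorem sqrt_le_four_div_exp_one_pow (m : ℕ) : √m ≤ (4 / exp 1) ^ (m - 1) := by
  rw [sqrt_le_left (by positivity), ← pow_mul, mul_comm, pow_mul]
  have h2 : (2 : ℝ) ≤ (4 / exp 1) ^ 2 := by
    rw [div_pow, le_div_iff₀ (by positivity)]
    linarith [exp_one_sq_lt_eight]
  have hm : m ≤ 2 ^ (m - 1) := by
    have := Nat.lt_two_pow_self (n := m - 1)
    omega
  calc (m : ℝ) ≤ 2 ^ (m - 1) := by exact_mod_cast hm
    _ ≤ ((4 / exp 1) ^ 2) ^ (m - 1) := by gcongr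

theorem exp_one_mul_sqrt_mul_sq_le {m : ℕ} (hm : 2 ≤ m) {k : ℝ} (hk : 2 ≤ k) :
    exp 1 * √m * (k / exp 1) ^ 2 ≤ (2 * k / exp 1) ^ m := by
  obtain ⟨n, rfl⟩ := Nat.exists_eq_add_of_le' hm
  have hsqrt := sqrt_le_four_div_exp_one_pow (n + 2)
  rw [show n + 2 - 1 = n + 1 by omega] at hsqrt
  calc exp 1 * √(n + 2 : ℕ) * (k / exp 1) ^ 2
        ≤ exp 1 * (4 / exp 1) ^ (n + 1) * (k / exp 1) ^ 2 := by gcongr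
    _ = (4 / exp 1) ^ n * (2 * k / exp 1) ^ 2 := by
        rw [pow_succ]
        field_simp [(exp_pos 1).ne']
        ring
    _ ≤ (2 * k / exp 1) ^ n * (2 * k / exp 1) ^ 2 := by
        gcongr
        linarith
    _ = (2 * k / exp 1) ^ (n + 2) := by ring

theorem half_pow_mul_factorial_pow_mul_factorial_sq_le {m k : ℕ} (hm : 2 ≤ m) (hk : 2 ≤ k) :
    ((m * k : ℕ) / 2 : ℝ) ^ (m * k) * (m ! : ℝ) ^ k * (k ! : ℝ) ^ 2 ≤ ((m * k)! : ℝ) ^ 2 := by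
  set E := exp 1
  have hM : (2 : ℝ) ≤ m := by exact_mod_cast hm
  have hK : (2 : ℝ) ≤ k := by exact_mod_cast hk
  have hsmall : E ^ 2 * k ≤ 2 * π * (m * k) := by
    have : (2 : ℝ) * 3 * 2 * k ≤ 2 * π * m * k := by
      gcongr
      exact pi_gt_three.le
    nlinarith [exp_one_sq_lt_eight]
  calc ((m * k : ℕ) / 2 : ℝ) ^ (m * k) * (m ! : ℝ) ^ k * (k ! : ℝ) ^ 2
      ≤ ((m * k : ℕ) / 2 : ℝ) ^ (m * k) * (E * √m * (m / E) ^ m) ^ k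
          * (E * √k * (k / E) ^ k) ^ 2 := by
        gcongr
        · exact factorial_le_stirling (by omega)
        · exact factorial_le_stirling (by omega)
    _ = ((m * k : ℝ) / 2) ^ (m * k) * (m / E) ^ (m * k)
          * ((E * √m * (k / E) ^ 2) ^ k * (E ^ 2 * k)) := by
        rw [mul_pow (E * √k), mul_pow E, sq_sqrt (by positivity)]
        push_cast
        ring
    _ ≤ ((m * k : ℝ) / 2) ^ (m * k) * (m / E) ^ (m * k)
          * (((2 * k / E) ^ m) ^ k * (2 * π * (m * k))) := by
        gcongr _ * (?_ ^ k * ?_)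
        exact exp_one_mul_sqrt_mul_sq_le hm hK
    _ = ((m * k : ℝ) / 2 * (m / E) * (2 * k / E)) ^ (m * k) * (2 * π * (m * k)) := by
        rw [mul_pow, mul_pow, ← pow_mul]
        ring
    _ = (√(2 * π * (m * k : ℕ)) * ((m * k : ℕ) / E) ^ (m * k)) ^ 2 := by
        have hbase : (m * k : ℝ) / 2 * (m / E) * (2 * k / E) = ((m * k : ℝ) / E) ^ 2 := by
          field_simp
        rw [hbase, mul_pow (√_), sq_sqrt (by positivity)]
        push_cast
        ring
    _ ≤ ((m * k)! : ℝ) ^ 2 := by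
        gcongr
        exact Stirling.le_factorial_stirling _

theorem choose_pow_mul_sq_le {m : ℕ} (hm : 2 ≤ m) (k : ℕ) :
    ((m * k / 2).choose m : ℝ) ^ k * ((m ! ^ k * k ! : ℕ) : ℝ) ^ 2 ≤ ((m * k)! : ℝ) ^ 2 := by
  obtain _ | _ | k := k
  · simp
  · simp [Nat.choose_eq_zero_of_lt (show m / 2 < m by omega)]
  push_cast
  have hchoose : ((m * (k + 2) / 2).choose m : ℝ) * m ! ≤ ((m * (k + 2) : ℕ) / 2 : ℝ) ^ m := by
    rw [← le_div_iff₀ (by positivity)]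
    refine (Nat.choose_le_pow_div m _).trans ?_
    gcongr
    exact Nat.cast_div_le
  calc ((m * (k + 2) / 2).choose m : ℝ) ^ (k + 2) * ((m ! : ℝ) ^ (k + 2) * ((k + 2)! : ℝ)) ^ 2
      = (((m * (k + 2) / 2).choose m : ℝ) * m !) ^ (k + 2) * (m ! : ℝ) ^ (k + 2)
          * ((k + 2)! : ℝ) ^ 2 := by ring
    _ ≤ (((m * (k + 2) : ℕ) / 2 : ℝ) ^ m) ^ (k + 2) * (m ! : ℝ) ^ (k + 2)
          * ((k + 2)! : ℝ) ^ 2 := by gcongr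
    _ = ((m * (k + 2) : ℕ) / 2 : ℝ) ^ (m * (k + 2)) * (m ! : ℝ) ^ (k + 2)
          * ((k + 2)! : ℝ) ^ 2 := by rw [pow_mul]
    _ ≤ ((m * (k + 2))! : ℝ) ^ 2 := half_pow_mul_factorial_pow_mul_factorial_sq_le hm (by omega)

theorem rpow_half_mul_le_of_pow_le_sq {x y : ℝ} (hx : 0 ≤ x) (hy : 0 ≤ y) {k : ℕ}
    (h : x ^ k ≤ y ^ 2) : x ^ ((1 / 2 : ℝ) * k) ≤ y := by
  rw [mul_comm, rpow_mul hx, rpow_natCast, ← sqrt_eq_rpow]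
  exact (sqrt_le_left hy).2 h

theorem stmt_14 (p m : ℕ) (hm : 2 ≤ m) (hdvd : m ∣ p) :
    numBlockPartitions p m
        = Nat.factorial p / (Nat.factorial m ^ (p / m) * Nat.factorial (p / m)) ∧
    ((Nat.choose (p / 2) m : ℝ) ^ ((1 / 2 : ℝ) * (p / m : ℕ))
        ≤ (numBlockPartitions p m : ℝ)) := by
  have hcount := factorial_eq_numBlockPartitions_mul (by omega : 0 < m) hdvd
  refine ⟨(Nat.div_eq_of_eq_mul_left (by positivity) hcount).symm,
    rpow_half_mul_le_of_pow_le_sq (Nat.cast_nonneg _) (Nat.cast_nonneg _) ?_⟩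
  have hbound := choose_pow_mul_sq_le hm (p / m)
  rw [Nat.mul_div_cancel' hdvd, hcount, Nat.cast_mul (numBlockPartitions p m), mul_pow]
    at hbound
  exact le_of_mul_le_mul_right hbound (by positivity)
end
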